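/- arXiv:1509.01823 — 3 statements merged into one kernel-verified Lean document; each statement's English description precedes it below -/
import Mathlib

section
/- Every r-graph (an r-regular graph G such that |∂S| ≥ r for every vertex subset S of odd cardinality) has a perfect matching. -/
open Finset Filter Topology

/-- Edges of a multigraph (given by endpoint maps `fst`, `snd`) with exactly
one endpoint in `S`, i.e. the edge cut `∂S`. -/
def edgeBoundary {V E : Type*} [Fintype E] [DecidableEq V] (fst snd : E → V)
    (S : Finset V) : Finset E :=
  univ.filter (fun e => ¬ (fst e ∈ S ↔ snd e ∈ S))

/-- A perfect matching of the multigraph: every vertex lies in exactly one edge of `M`. -/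
def IsPerfectMatching {V E : Type*} [DecidableEq V] (fst snd : E → V)
    (M : Finset E) : Prop :=
  ∀ v : V, (M.filter (fun e => fst e = v ∨ snd e = v)).card = 1

/-- An `r`-graph: `r`-regular and every odd vertex set has edge boundary of size at least `r`. -/
def IsRGraph {V E : Type*} [Fintype V] [Fintype E] [DecidableEq V] (fst snd : E → V)
    (r : ℕ) : Prop :=
  (∀ v : V, (univ.filter (fun e => fst e = v)).card
      + (univ.filter (fun e => snd e = v)).card = r) ∧
  (∀ S : Finset V, Odd S.card → r ≤ (edgeBoundary fst snd S).card)

/-- A fractional 1-factor. -/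
def IsFracOneFactor {V E : Type*} [Fintype V] [Fintype E] [DecidableEq V]
    (fst snd : E → V) (w : E → ℝ) : Prop :=
  (∀ e, 0 ≤ w e ∧ w e ≤ 1) ∧
  (∀ v : V, ∑ e ∈ edgeBoundary fst snd {v}, w e = 1) ∧
  (∀ S : Finset V, Odd S.card → 1 ≤ ∑ e ∈ edgeBoundary fst snd S, w e)

/-- Characteristic vector of a set of edges. -/
def chi {E : Type*} [DecidableEq E] (M : Finset E) : E → ℝ :=
  fun e => if e ∈ M then 1 else 0


/-!
Apply Tutte's theorem to the underlying simple graph. Deleting a vertex set `u`, each component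
`C` of the rest is separated by `u`, so every edge of `∂C` joins `C` to `u`, and the cuts of
distinct components are disjoint. An odd component has `|∂C| ≥ r`, while at most `r |u|` edges
meet `u`; hence there are at most `|u|` odd components. A perfect matching of the simple graph
lifts to the multigraph by choosing one edge for each matched pair.
-/

def SimpleGraph.Separates {V : Type*} (G : SimpleGraph V) (U C : Finset V) : Prop :=
  ∀ x ∈ C, ∀ y, G.Adj x y → y ∈ C ∨ y ∈ U

section Multigraph

variable {V E : Type*} [Fintype E] [DecidableEq V] (fst snd : E → V)

def underlyingGraph : SimpleGraph V :=
  SimpleGraph.fromRel fun v w => ∃ e, fst e = v ∧ snd e = w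

def vertexDegree (v : V) : ℕ :=
  #{e | fst e = v} + #{e | snd e = v}

lemma card_incident_le_sum_vertexDegree (U : Finset V) :
    #{e | fst e ∈ U ∨ snd e ∈ U} ≤ ∑ v ∈ U, vertexDegree fst snd v := by
  classical
  simp only [filter_or, vertexDegree, sum_add_distrib]
  refine (card_union_le _ _).trans (add_le_add ?_ ?_)
  · rw [card_eq_sum_card_fiberwise (f := fst) (t := U) (fun e he => by simpa using he)]
    exact sum_le_sum fun v _ => card_le_card fun e => by simp +contextual
  · rw [card_eq_sum_card_fiberwise (f := snd) (t := U) (fun e he => by simpa using he)]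
    exact sum_le_sum fun v _ => card_le_card fun e => by simp +contextual

variable {fst snd} {C D U : Finset V}

lemma edgeBoundary_ends_of_separates (hC : (underlyingGraph fst snd).Separates U C)
    {e : E} (he : e ∈ edgeBoundary fst snd C) :
    (fst e ∈ C ∧ snd e ∈ U) ∨ (snd e ∈ C ∧ fst e ∈ U) := by
  simp only [edgeBoundary, mem_filter, mem_univ, true_and] at he
  have hadj : (underlyingGraph fst snd).Adj (fst e) (snd e) :=
    ⟨fun h => he (h ▸ Iff.rfl), Or.inl ⟨e, rfl, rfl⟩⟩
  by_cases h : fst e ∈ C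
  · exact Or.inl ⟨h, (hC _ h _ hadj).resolve_left fun h' => he (iff_of_true h h')⟩
  · have h' : snd e ∈ C := by tauto
    exact Or.inr ⟨h', (hC _ h' _ hadj.symm).resolve_left h⟩

lemma disjoint_edgeBoundary_of_separates (hC : (underlyingGraph fst snd).Separates U C)
    (hCD : Disjoint C D) (hDU : Disjoint D U) :
    Disjoint (edgeBoundary fst snd C) (edgeBoundary fst snd D) := by
  refine disjoint_left.mpr fun e heC heD => ?_
  have hD : fst e ∈ D ∨ snd e ∈ D := by
    simp only [edgeBoundary, mem_filter, mem_univ, true_and] at heD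
    tauto
  rcases edgeBoundary_ends_of_separates hC heC with ⟨h1, h2⟩ | ⟨h1, h2⟩ <;>
    rcases hD with h | h
  · exact disjoint_left.mp hCD h1 h
  · exact disjoint_left.mp hDU h h2
  · exact disjoint_left.mp hDU h h2
  · exact disjoint_left.mp hCD h1 h

theorem sum_card_edgeBoundary_le {ι : Type*} {s : Finset ι} {C : ι → Finset V}
    (hsep : ∀ i ∈ s, (underlyingGraph fst snd).Separates U (C i))
    (hdisj : (s : Set ι).PairwiseDisjoint C) (hU : ∀ i ∈ s, Disjoint (C i) U) :
    ∑ i ∈ s, #(edgeBoundary fst snd (C i)) ≤ ∑ v ∈ U, vertexDegree fst snd v := by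
  classical
  rw [← card_biUnion fun i hi j hj hij =>
    disjoint_edgeBoundary_of_separates (hsep i hi) (hdisj hi hj hij) (hU j hj)]
  refine (card_le_card fun e he => ?_).trans (card_incident_le_sum_vertexDegree fst snd U)
  obtain ⟨i, hi, he⟩ := mem_biUnion.mp he
  rcases edgeBoundary_ends_of_separates (hsep i hi) he with h | h <;> simp [h]

theorem IsRGraph.card_le_of_separates [Fintype V] {r : ℕ} (hG : IsRGraph fst snd r)
    (hr : 1 ≤ r) {ι : Type*} {s : Finset ι} {C : ι → Finset V}
    (hodd : ∀ i ∈ s, Odd #(C i))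
    (hsep : ∀ i ∈ s, (underlyingGraph fst snd).Separates U (C i))
    (hdisj : (s : Set ι).PairwiseDisjoint C) (hU : ∀ i ∈ s, Disjoint (C i) U) :
    #s ≤ #U := by
  refine Nat.le_of_mul_le_mul_left ?_ hr
  calc r * #s = ∑ i ∈ s, r := by simp [mul_comm]
    _ ≤ ∑ i ∈ s, #(edgeBoundary fst snd (C i)) :=
      sum_le_sum fun i hi => hG.2 _ (hodd i hi)
    _ ≤ ∑ v ∈ U, vertexDegree fst snd v := sum_card_edgeBoundary_le hsep hdisj hU
    _ = r * #U := by simp [vertexDegree, hG.1, mul_comm]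

end Multigraph

section Components

open SimpleGraph

variable {V : Type*} {G : SimpleGraph V} {u : Set V} [Finite V]

noncomputable def componentFinset
    (c : ((⊤ : G.Subgraph).deleteVerts u).coe.ConnectedComponent) : Finset V :=
  (Set.toFinite (Subtype.val '' c.supp)).toFinset

variable (c d : ((⊤ : G.Subgraph).deleteVerts u).coe.ConnectedComponent)

lemma card_componentFinset : #(componentFinset c) = c.supp.ncard := by
  rw [componentFinset, ← Set.ncard_eq_toFinset_card _,
    Set.ncard_image_of_injective _ Subtype.val_injective]

lemma disjoint_componentFinset (hcd : c ≠ d) :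
    Disjoint (componentFinset c) (componentFinset d) := by
  refine disjoint_left.mpr fun v hc hd => hcd ?_
  simp only [componentFinset, Set.Finite.mem_toFinset, Set.mem_image] at hc hd
  obtain ⟨x, hxc, rfl⟩ := hc
  obtain ⟨y, hyd, hxy⟩ := hd
  rw [Subtype.ext hxy] at hyd
  exact ConnectedComponent.eq_of_common_vertex hxc hyd

lemma disjoint_componentFinset_toFinset [Fintype u] :
    Disjoint (componentFinset c) u.toFinset := by
  refine disjoint_left.mpr fun v hv hvu => ?_
  simp only [componentFinset, Set.Finite.mem_toFinset, Set.mem_image] at hv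
  obtain ⟨x, -, rfl⟩ := hv
  have := x.2
  simp_all

lemma separates_componentFinset [Fintype u] :
    G.Separates u.toFinset (componentFinset c) := by
  intro x hx y hxy
  by_cases hyu : y ∈ u
  · exact Or.inr (Set.mem_toFinset.mpr hyu)
  simp only [componentFinset, Set.Finite.mem_toFinset] at hx ⊢
  refine Or.inl (ConnectedComponent.mem_coe_supp_of_adj hx (by simp [hyu]) ?_)
  obtain ⟨x', -, rfl⟩ := hx
  have := x'.2
  simp_all

end Components

section Tutte

open SimpleGraph

variable {V E : Type*} [Fintype V] [Fintype E] [DecidableEq V] {fst snd : E → V}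

theorem IsRGraph.not_isTutteViolator {r : ℕ} (hG : IsRGraph fst snd r) (hr : 1 ≤ r)
    (u : Set V) : ¬ (underlyingGraph fst snd).IsTutteViolator u := by
  classical
  have hfin := (Set.toFinite
    ((⊤ : (underlyingGraph fst snd).Subgraph).deleteVerts u).coe.oddComponents)
  rw [IsTutteViolator, not_lt, Set.ncard_eq_toFinset_card _ hfin, Set.ncard_eq_toFinset_card']
  exact hG.card_le_of_separates hr (C := componentFinset)
    (fun c hc => by simpa [card_componentFinset] using hc)
    (fun c _ => separates_componentFinset c)
    (fun c _ d _ hcd => disjoint_componentFinset c d hcd)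
    (fun c _ => disjoint_componentFinset_toFinset c)

end Tutte

lemma SimpleGraph.Subgraph.IsMatching.eq_toEdge_of_mem {V : Type*} {G : SimpleGraph V}
    {M : G.Subgraph} (h : M.IsMatching) {p : M.edgeSet} {v : V} (hv : v ∈ (p : Sym2 V)) :
    p = h.toEdge ⟨v, M.mem_verts_of_mem_edge p.2 hv⟩ := by
  obtain ⟨p, hp⟩ := p
  obtain ⟨w, rfl⟩ := Sym2.mem_iff_exists.mp hv
  exact (h.toEdge_eq_of_adj hp).symm

section Lift

variable {V E : Type*} [Fintype E] [DecidableEq V] {fst snd : E → V}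

theorem exists_isPerfectMatching_of_underlyingGraph {M : (underlyingGraph fst snd).Subgraph}
    (hM : M.IsPerfectMatching) : ∃ M' : Finset E, IsPerfectMatching fst snd M' := by
  classical
  have hlift (p : M.edgeSet) : ∃ e, s(fst e, snd e) = p := by
    obtain ⟨p, hp⟩ := p
    induction p using Sym2.ind with | h v w => ?_
    obtain ⟨-, ⟨e, rfl, rfl⟩ | ⟨e, rfl, rfl⟩⟩ := M.adj_sub hp
    exacts [⟨e, rfl⟩, ⟨e, Sym2.eq_swap⟩]
  choose lift hlift using hlift
  have hends (p : M.edgeSet) (v : V) :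
      fst (lift p) = v ∨ snd (lift p) = v ↔ v ∈ (p : Sym2 V) := by
    rw [← hlift p, Sym2.mem_iff, eq_comm, @eq_comm _ (snd _)]
  refine ⟨univ.filter (· ∈ Set.range lift), fun v => card_eq_one.mpr ?_⟩
  refine ⟨lift (hM.1.toEdge ⟨v, hM.2 v⟩), ext fun e => ?_⟩
  simp only [mem_filter, mem_univ, true_and, Set.mem_range, mem_singleton]
  constructor
  · rintro ⟨⟨p, rfl⟩, hv⟩
    rw [← hM.1.eq_toEdge_of_mem ((hends p v).mp hv)]
  · rintro rfl
    exact ⟨⟨_, rfl⟩, (hends _ v).mpr (hM.1.mem_coe_toEdge _)⟩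

end Lift

/-- Every `r`-graph has a perfect matching. -/
theorem rGraph_has_perfect_matching {V E : Type*} [Fintype V] [Fintype E] [DecidableEq V]
    (r : ℕ) (hr : 1 ≤ r) (fst snd : E → V) (hG : IsRGraph fst snd r) :
    ∃ M : Finset E, IsPerfectMatching fst snd M := by
  obtain ⟨M, hM⟩ := SimpleGraph.tutte.mpr (hG.not_isTutteViolator hr)
  exact exists_isPerfectMatching_of_underlyingGraph hM
end

section
/- Let r ≥ 4 be even and define a_k = ((r²−3r+1)k − (r²−5r+3))/((r²−2r−1)k − (r²−4r−1)) and b_k = ((r−2)k − (r−4))/((r²−2r−1)k − (r²−4r−1)). If a sequence (u_k) of reals in [0,1] satisfies u₁ ≥ 1/r and u_k ≥ a_k·u_{k−1} + b_k for k ≥ 2, then u_k ≥ 1 − ∏_{i=1}^{k} a_i for all k ≥ 1. -/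
open Finset Filter Topology

/-! Writing `b_k = 1 - a_k`, the recurrence says `1 - u_k ≤ a_k (1 - u_{k-1})`, and `1 - u_1 ≤ 1 - 1/r = a_1`;
since every `a_k` is nonnegative, the products telescope to `1 - u_k ≤ ∏_{i ≤ k} a_i`. -/

theorem one_sub_prod_le_of_affine_recurrence {a u : ℕ → ℝ} (ha : ∀ k, 2 ≤ k → 0 ≤ a k)
    (h1 : 1 - a 1 ≤ u 1) (hrec : ∀ k, 1 ≤ k → a (k + 1) * u k + (1 - a (k + 1)) ≤ u (k + 1)) :
    ∀ k, 1 ≤ k → 1 - ∏ i ∈ Icc 1 k, a i ≤ u k := by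
  intro k hk
  induction k, hk using Nat.le_induction with
  | base => simpa using h1
  | succ k hk ih =>
    rw [prod_Icc_succ_top (by omega)]
    have hprod : 1 - u k ≤ ∏ i ∈ Icc 1 k, a i := by linarith
    have hstep : a (k + 1) * (1 - u k) ≤ a (k + 1) * ∏ i ∈ Icc 1 k, a i :=
      mul_le_mul_of_nonneg_left hprod (ha (k + 1) (by omega))
    linarith [hrec k hk]

/-- The coefficient `a_k` of the recurrence, as a function of real `r` and `k`. -/
noncomputable def recCoeff (r k : ℝ) : ℝ :=
  ((r ^ 2 - 3 * r + 1) * k - (r ^ 2 - 5 * r + 3)) / ((r ^ 2 - 2 * r - 1) * k - (r ^ 2 - 4 * r - 1))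

section recCoeff

variable {r k : ℝ}

theorem recCoeff_denom_pos (hr : 3 ≤ r) (hk : 1 ≤ k) :
    0 < (r ^ 2 - 2 * r - 1) * k - (r ^ 2 - 4 * r - 1) := by
  nlinarith [mul_nonneg (by nlinarith : (0 : ℝ) ≤ r ^ 2 - 2 * r - 1) (sub_nonneg.2 hk)]

theorem recCoeff_nonneg (hr : 3 ≤ r) (hk : 1 ≤ k) : 0 ≤ recCoeff r k := by
  refine div_nonneg ?_ (recCoeff_denom_pos hr hk).le
  nlinarith [mul_nonneg (by nlinarith : (0 : ℝ) ≤ r ^ 2 - 3 * r + 1) (sub_nonneg.2 hk)]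

theorem recCoeff_one (hr : r ≠ 0) : recCoeff r 1 = 1 - 1 / r := by
  unfold recCoeff
  rw [show (r ^ 2 - 2 * r - 1) * 1 - (r ^ 2 - 4 * r - 1) = 2 * r by ring]
  field_simp
  ring

theorem one_sub_recCoeff (hD : (r ^ 2 - 2 * r - 1) * k - (r ^ 2 - 4 * r - 1) ≠ 0) :
    1 - recCoeff r k = ((r - 2) * k - (r - 4)) / ((r ^ 2 - 2 * r - 1) * k - (r ^ 2 - 4 * r - 1)) := by
  rw [recCoeff, eq_div_iff hD, sub_mul, div_mul_cancel₀ _ hD]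
  ring

end recCoeff

theorem recurrence_lower_bound_general (r : ℕ) (hr : 4 ≤ r) (u : ℕ → ℝ)
    (h1 : 1 / (r : ℝ) ≤ u 1)
    (hrec : ∀ k, 2 ≤ k →
      (((r : ℝ) ^ 2 - 3 * r + 1) * k - ((r : ℝ) ^ 2 - 5 * r + 3))
          / (((r : ℝ) ^ 2 - 2 * r - 1) * k - ((r : ℝ) ^ 2 - 4 * r - 1)) * u (k - 1)
        + (((r : ℝ) - 2) * k - ((r : ℝ) - 4))
          / (((r : ℝ) ^ 2 - 2 * r - 1) * k - ((r : ℝ) ^ 2 - 4 * r - 1)) ≤ u k) :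
    ∀ k, 1 ≤ k →
      1 - ∏ i ∈ (Finset.Icc 1 k : Finset ℕ),
          (((r : ℝ) ^ 2 - 3 * r + 1) * (i : ℝ) - ((r : ℝ) ^ 2 - 5 * r + 3))
            / (((r : ℝ) ^ 2 - 2 * r - 1) * (i : ℝ) - ((r : ℝ) ^ 2 - 4 * r - 1)) ≤ u k := by
  have hr3 : (3 : ℝ) ≤ r := by norm_cast; omega
  refine one_sub_prod_le_of_affine_recurrence (a := fun i => recCoeff r i)
    (fun k hk => recCoeff_nonneg hr3 (by norm_cast; omega)) ?_ (fun k hk => ?_)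
  · simpa [recCoeff_one (show (r : ℝ) ≠ 0 by positivity)] using h1
  · have hk1 : (1 : ℝ) ≤ ((k + 1 : ℕ) : ℝ) := by norm_cast; omega
    have h := hrec (k + 1) (by omega)
    rw [Nat.add_sub_cancel] at h
    rw [one_sub_recCoeff (recCoeff_denom_pos hr3 hk1).ne']
    exact h

theorem recurrence_lower_bound (r : ℕ) (hre : Even r) (hr : 4 ≤ r) (u : ℕ → ℝ)
    (hu : ∀ k, 0 ≤ u k ∧ u k ≤ 1) (h1 : 1 / (r : ℝ) ≤ u 1)
    (hrec : ∀ k, 2 ≤ k →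
      (((r : ℝ) ^ 2 - 3 * r + 1) * k - ((r : ℝ) ^ 2 - 5 * r + 3))
          / (((r : ℝ) ^ 2 - 2 * r - 1) * k - ((r : ℝ) ^ 2 - 4 * r - 1)) * u (k - 1)
        + (((r : ℝ) - 2) * k - ((r : ℝ) - 4))
          / (((r : ℝ) ^ 2 - 2 * r - 1) * k - ((r : ℝ) ^ 2 - 4 * r - 1)) ≤ u k) :
    ∀ k, 1 ≤ k →
      1 - ∏ i ∈ (Finset.Icc 1 k : Finset ℕ),
          (((r : ℝ) ^ 2 - 3 * r + 1) * (i : ℝ) - ((r : ℝ) ^ 2 - 5 * r + 3))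
            / (((r : ℝ) ^ 2 - 2 * r - 1) * (i : ℝ) - ((r : ℝ) ^ 2 - 4 * r - 1)) ≤ u k :=
  recurrence_lower_bound_general r hr u h1 hrec
end

section
/- Suppose every r-graph has 2r perfect matchings such that each edge is contained in exactly two of them (the generalized Berge–Fulkerson conjecture). Then for every r ≥ 3 and every 1 ≤ k ≤ 2r−1, every r-graph G has k perfect matchings M₁,…,M_k with |⋃ᵢ Mᵢ|/|E(G)| ≥ 1 − ∏_{i=1}^k (2r−1−i)/(2r+1−i). -/
open Finset Filter Topology

/-!
Take the `2r` perfect matchings given by the conjecture and choose `k` of them uniformly at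
random. An edge lies in exactly two of the `2r` matchings, so it is missed by a proportion
`C(2r-2, k) / C(2r, k) = ∏_{i=1}^k (2r-1-i)/(2r+1-i)` of the `k`-subsets. Averaging over the
`k`-subsets, some choice misses at most that fraction of the edges.
-/

theorem Nat.cast_choose_succ_mul (m k : ℕ) :
    (m.choose (k + 1) : ℝ) * (k + 1) = m.choose k * (m - k) := by
  rcases le_or_gt k m with hkm | hmk
  · have h := congrArg (Nat.cast : ℕ → ℝ) (Nat.choose_succ_right_eq m k)
    push_cast [Nat.cast_sub hkm] at h
    exact h
  · simp [Nat.choose_eq_zero_of_lt hmk, Nat.choose_eq_zero_of_lt (hmk.trans k.lt_succ_self)]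

theorem prod_Icc_sub_one_div_add_one_eq_choose_div (n k : ℕ) (hn : 2 ≤ n) (hk : k ≤ n) :
    ∏ i ∈ Icc 1 k, ((n : ℝ) - 1 - i) / ((n : ℝ) + 1 - i)
      = ((n - 2).choose k : ℝ) / n.choose k := by
  induction k with
  | zero => simp
  | succ k ih =>
    rw [prod_Icc_succ_top (by omega), ih (by omega)]
    have hchoose : (n.choose k : ℝ) ≠ 0 := by exact_mod_cast (Nat.choose_pos (by omega)).ne'
    have hchoose_succ : (n.choose (k + 1) : ℝ) ≠ 0 := by exact_mod_cast (Nat.choose_pos hk).ne'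
    have hfactor : (n : ℝ) + 1 - (k + 1 : ℕ) ≠ 0 := by
      have : ((k + 1 : ℕ) : ℝ) ≤ n := by exact_mod_cast hk
      linarith
    have h_n := Nat.cast_choose_succ_mul n k
    have h_n_sub := Nat.cast_choose_succ_mul (n - 2) k
    rw [Nat.cast_sub hn] at h_n_sub
    rw [div_mul_div_comm, div_eq_div_iff (mul_ne_zero hchoose hfactor) hchoose_succ]
    push_cast
    linear_combination ((n - 2).choose (k + 1) : ℝ) * h_n - (n.choose (k + 1) : ℝ) * h_n_sub

theorem one_sub_div_mul_le_of_mul_sub_le {K : Type*} [Field K] [LinearOrder K]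
    [IsStrictOrderedRing K] {a b n c : K} (hb : 0 < b) (h : b * (n - c) ≤ a * n) :
    (1 - a / b) * n ≤ c := by
  rw [one_sub_div hb.ne', div_mul_eq_mul_div, div_le_iff₀ hb]
  linarith

theorem Finset.univ_biUnion_comp_orderEmbOfFin {α β : Type*} [LinearOrder α] [DecidableEq β]
    (F : α → Finset β) (s : Finset α) {k : ℕ} (h : #s = k) :
    univ.biUnion (F ∘ s.orderEmbOfFin h) = s.biUnion F := by
  conv_rhs => rw [← image_orderEmbOfFin_univ s h]
  rw [image_biUnion]
  rfl

section Averaging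

variable {ι E : Type*} [Fintype ι] [DecidableEq ι] [DecidableEq E]

theorem filter_powersetCard_not_mem_biUnion (F : ι → Finset E) (k : ℕ) (e : E) :
    {s ∈ powersetCard k (univ : Finset ι) | e ∉ s.biUnion F}
      = powersetCard k {i : ι | e ∉ F i} := by
  ext s
  simp [subset_iff, and_comm]

theorem sum_card_compl_biUnion_le [Fintype E] {F : ι → Finset E} {d : ℕ}
    (hF : ∀ e, d ≤ #{i | e ∈ F i}) (k : ℕ) :
    ∑ s ∈ powersetCard k (univ : Finset ι), #(s.biUnion F)ᶜ
      ≤ Fintype.card E * (Fintype.card ι - d).choose k := by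
  calc ∑ s ∈ powersetCard k (univ : Finset ι), #(s.biUnion F)ᶜ
      = ∑ e : E, #{s ∈ powersetCard k (univ : Finset ι) | e ∉ s.biUnion F} := by
        have hcompl (s : Finset ι) : (s.biUnion F)ᶜ = ({e | e ∉ s.biUnion F} : Finset E) := by
          ext; simp
        simp only [hcompl, card_filter]
        exact sum_comm
    _ ≤ ∑ _e : E, (Fintype.card ι - d).choose k := by
        refine sum_le_sum fun e _ => ?_
        rw [filter_powersetCard_not_mem_biUnion, card_powersetCard]
        refine Nat.choose_le_choose k ?_
        have hsplit := card_filter_add_card_filter_not (s := (univ : Finset ι)) (p := (e ∈ F ·))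
        rw [card_univ] at hsplit
        have := hF e
        omega
    _ = Fintype.card E * (Fintype.card ι - d).choose k := by simp

theorem exists_card_eq_choose_mul_card_compl_biUnion_le [Fintype E] {F : ι → Finset E} {d : ℕ}
    (hF : ∀ e, d ≤ #{i | e ∈ F i}) {k : ℕ} (hk : k ≤ Fintype.card ι) :
    ∃ s : Finset ι, #s = k ∧
      (Fintype.card ι).choose k * #(s.biUnion F)ᶜ
        ≤ (Fintype.card ι - d).choose k * Fintype.card E := by
  have hne : (powersetCard k (univ : Finset ι)).Nonempty := by simpa using hk
  obtain ⟨s, hs, hle⟩ := exists_le_of_sum_le hne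
    (f := fun s => (Fintype.card ι).choose k * #(s.biUnion F)ᶜ)
    (g := fun _ => (Fintype.card ι - d).choose k * Fintype.card E) <| by
      rw [← mul_sum, sum_const, card_powersetCard, card_univ, smul_eq_mul,
        mul_comm _ (Fintype.card E)]
      exact Nat.mul_le_mul_left _ (sum_card_compl_biUnion_le hF k)
  exact ⟨s, (mem_powersetCard.1 hs).2, hle⟩

end Averaging

/-- If the generalized Berge-Fulkerson conjecture holds, then every `r`-graph (`r ≥ 3`)
has `k` perfect matchings (`1 ≤ k ≤ 2r-1`) covering at least a
`1 - ∏_{i=1}^k (2r-1-i)/(2r+1-i)` fraction of the edges. -/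
theorem observation_from_GBF
    (GBF : ∀ (r : ℕ) (V E : Type) [Fintype V] [Fintype E] [DecidableEq V] [DecidableEq E]
      (fst snd : E → V), IsRGraph fst snd r →
      ∃ F : Fin (2 * r) → Finset E, (∀ i, IsPerfectMatching fst snd (F i)) ∧
        ∀ e : E, (univ.filter (fun i => e ∈ F i)).card = 2) :
    ∀ (r k : ℕ), 3 ≤ r → 1 ≤ k → k ≤ 2 * r - 1 →
    ∀ (V E : Type) [Fintype V] [Fintype E] [DecidableEq V] [DecidableEq E]
      (fst snd : E → V), IsRGraph fst snd r →
      ∃ M : Fin k → Finset E, (∀ i, IsPerfectMatching fst snd (M i)) ∧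
        (1 - ∏ i ∈ (Finset.Icc 1 k : Finset ℕ), (2 * (r : ℝ) - 1 - i) / (2 * (r : ℝ) + 1 - i))
            * (Fintype.card E : ℝ) ≤ ((univ.biUnion M).card : ℝ) := by
  intro r k hr _ hk V E _ _ _ _ fst snd hG
  obtain ⟨F, hF_matching, hF_double⟩ := GBF r V E fst snd hG
  obtain ⟨s, hs, hs_le⟩ := exists_card_eq_choose_mul_card_compl_biUnion_le (d := 2)
    (fun e => (hF_double e).ge) (k := k) (by simp; omega)
  refine ⟨F ∘ s.orderEmbOfFin hs, fun i => hF_matching _, ?_⟩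
  have hprod := prod_Icc_sub_one_div_add_one_eq_choose_div (2 * r) k (by omega) (by omega)
  push_cast at hprod
  have hpos : (0 : ℝ) < (2 * r).choose k := by exact_mod_cast Nat.choose_pos (by omega)
  have hcount : ((2 * r).choose k : ℝ) * (Fintype.card E - #(s.biUnion F))
      ≤ (2 * r - 2).choose k * Fintype.card E := by
    rw [← Nat.cast_sub (card_le_univ _), ← card_compl]
    rw [Fintype.card_fin] at hs_le
    exact_mod_cast hs_le
  rw [univ_biUnion_comp_orderEmbOfFin, hprod]
  exact one_sub_div_mul_le_of_mul_sub_le hpos hcount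
end
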